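/- If t satisfies the separation bound min_{x,y} P^t(x,y)/π(y) ≥ 1/4 (i.e., total separation s(t) ≤ 3/4), then there exists a randomized stopping time S with values in {t, 2t, 3t, ...} such that for every starting state x, X_S is distributed according to π and E_x[S] = 4t. In particular t_stop ≤ 4·t_sep. -/

import Mathlib

/-!
Run the chain in blocks of `t` steps. By the separation bound, any nonnegative mass `m` present
at the start of a block dominates `(m / 4) • π` after the block, so we may stop a quarter of the
remaining mass, distributed exactly as `π`, at the end of every block while the residual stays
nonnegative. The residual after `m` blocks has total mass `(3/4)^m`, so the number of blocks
is geometric with mean `4`: the stopping state has law `π` and `E[S] = 4t`.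
-/

open scoped BigOperators ENNReal

noncomputable section

/-- Total variation distance between two distributions on a finite set,
as half the `ℓ¹` distance. -/
def tv {S : Type*} [Fintype S] (μ ν : S → ℝ) : ℝ := (1 / 2) * ∑ y, |μ y - ν y|

/-- Law of the chain with transition matrix `P` started at `x`, evaluated at an
independent random time with distribution `T` on ℕ. -/
def lawAt {S : Type*} [Fintype S] [DecidableEq S] (P : Matrix S S ℝ) (T : ℕ → ℝ)
    (x : S) : S → ℝ :=
  fun y => ∑' n, T n * (P ^ n) x y

/-- The geometric distribution on `{1,2,...}` with mean `t` (success probability `1/t`). -/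
def geo (t : ℕ) : ℕ → ℝ :=
  fun n => if n = 0 then 0 else (1 / (t : ℝ)) * (1 - 1 / (t : ℝ)) ^ (n - 1)

/-- A (randomized) stopping time for the chain with transition matrix `P` started from
distribution `μ`, encoded by the vectors `θ t x = ℙ(X_t = x, S ≥ t)` and
`σ t x = ℙ(X_t = x, S = t)` (Baxter–Chacon / filling-rule representation). -/
structure StoppingRule {S : Type*} [Fintype S] (P : Matrix S S ℝ) (μ : S → ℝ) where
  θ : ℕ → S → ℝ
  σ : ℕ → S → ℝ
  σ_nonneg : ∀ t x, 0 ≤ σ t x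
  σ_le : ∀ t x, σ t x ≤ θ t x
  θ_zero : ∀ x, θ 0 x = μ x
  θ_succ : ∀ t y, θ (t + 1) y = ∑ x, (θ t x - σ t x) * P x y

/-- Expectation of a stopping rule, `E[S] = ∑_t t · ℙ(S = t)`. -/
def stopExp {S : Type*} [Fintype S] {P : Matrix S S ℝ} {μ : S → ℝ}
    (R : StoppingRule P μ) : ℝ≥0∞ :=
  ∑' t : ℕ, (t : ℝ≥0∞) * ENNReal.ofReal (∑ x, R.σ t x)

/-- The stopping rule stops at a state distributed according to `π`. -/
def IsStat {S : Type*} [Fintype S] {P : Matrix S S ℝ} {μ : S → ℝ}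
    (R : StoppingRule P μ) (π : S → ℝ) : Prop :=
  ∀ y, ∑' t, R.σ t y = π y

/-- `t_stop`: the maximum over starting states of the minimal expected value of a
stationary (randomized) stopping time. -/
def tstop {S : Type*} [Fintype S] [DecidableEq S] (P : Matrix S S ℝ) (π : S → ℝ) : ℝ≥0∞ :=
  ⨆ x : S, ⨅ R : {R : StoppingRule P (fun y => if y = x then (1 : ℝ) else 0) // IsStat R π},
    stopExp R.1

open Matrix

lemma Nat.mod_add_one_eq_of_dvd_add_one {s t : ℕ} (ht : 0 < t) (h : t ∣ s + 1) :
    s % t + 1 = t := by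
  have hs := Nat.mod_add_div s t
  have hs' := Nat.mod_add_div (s + 1) t
  have := Nat.mod_lt s ht
  rw [Nat.succ_div_of_dvd h, Nat.mod_eq_zero_of_dvd h, mul_add] at hs'
  omega

lemma Nat.add_one_mod_of_not_dvd {s t : ℕ} (h : ¬t ∣ s + 1) : (s + 1) % t = s % t + 1 := by
  have hs := Nat.mod_add_div s t
  have hs' := Nat.mod_add_div (s + 1) t
  rw [Nat.succ_div_of_not_dvd h] at hs'
  omega

lemma hasSum_ite_dvd {α : Type*} [AddCommMonoid α] [TopologicalSpace α] {t : ℕ} (ht : 0 < t)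
    {f : ℕ → α} {a : α} : HasSum (fun s => if t ∣ s then f (s / t) else 0) a ↔ HasSum f a := by
  have hmul : Function.Injective (· * t) := fun m n h => Nat.eq_of_mul_eq_mul_right ht h
  have hcomp : (fun s => if t ∣ s then f (s / t) else 0) ∘ (· * t) = f := by
    ext m
    simp [Nat.mul_div_cancel _ ht]
  rw [← hmul.hasSum_iff fun s hs => if_neg fun hdvd => hs ⟨s / t, Nat.div_mul_cancel hdvd⟩, hcomp]

section Geometric

variable {k : ℕ}

lemma geo_zero (k : ℕ) : geo k 0 = 0 := rfl

lemma geo_succ (k n : ℕ) : geo k (n + 1) = 1 / k * (1 - 1 / k) ^ n := rfl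

lemma geo_nonneg (k n : ℕ) : 0 ≤ geo k n := by
  have : (0 : ℝ) ≤ 1 - 1 / k := by simpa using Nat.cast_inv_le_one (α := ℝ) k
  unfold geo
  split_ifs <;> positivity

lemma norm_one_sub_inv_lt_one (hk : 0 < k) : ‖(1 : ℝ) - 1 / k‖ < 1 := by
  rw [Real.norm_of_nonneg (by simpa using Nat.cast_inv_le_one (α := ℝ) k)]
  simpa using hk

lemma hasSum_geo (hk : 0 < k) : HasSum (geo k) 1 := by
  have hk' : (k : ℝ) ≠ 0 := by positivity
  have h := (hasSum_geometric_of_norm_lt_one (norm_one_sub_inv_lt_one hk)).mul_left (1 / k : ℝ)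
  rw [show 1 / (k : ℝ) * (1 - (1 - 1 / (k : ℝ)))⁻¹ = 1 by field_simp; ring] at h
  simpa [geo_zero] using HasSum.zero_add (f := geo k) (h.congr_fun (geo_succ k))

lemma hasSum_mul_geo (hk : 0 < k) : HasSum (fun n : ℕ => (n : ℝ) * geo k n) k := by
  have hk' : (k : ℝ) ≠ 0 := by positivity
  have hq := norm_one_sub_inv_lt_one hk
  have h := ((hasSum_coe_mul_geometric_of_norm_lt_one hq).add
    (hasSum_geometric_of_norm_lt_one hq)).mul_left (1 / k : ℝ)
  rw [show 1 / (k : ℝ) * ((1 - 1 / k) / (1 - (1 - 1 / k)) ^ 2 + (1 - (1 - 1 / (k : ℝ)))⁻¹) = k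
    by field_simp; ring] at h
  have h' : HasSum (fun n : ℕ => ((n + 1 : ℕ) : ℝ) * geo k (n + 1)) k :=
    h.congr_fun fun n => by rw [geo_succ]; push_cast; ring
  simpa using HasSum.zero_add (f := fun n : ℕ => (n : ℝ) * geo k n) h'

end Geometric

namespace StoppingRule

variable {S : Type*} [Fintype S] {P : Matrix S S ℝ} {μ π : S → ℝ}

def reachedOfResidual (P : Matrix S S ℝ) (μ : S → ℝ) (ρ : ℕ → S → ℝ) : ℕ → S → ℝ
  | 0 => μ
  | s + 1 => ρ s ᵥ* P

/-- The stopping rule whose unstopped mass `ℙ(X_s = ·, S > s)` is `ρ s`. -/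
def ofResidual (ρ : ℕ → S → ℝ) (hρ : ∀ s x, 0 ≤ ρ s x) (hρμ : ∀ x, ρ 0 x ≤ μ x)
    (hρP : ∀ s x, ρ (s + 1) x ≤ (ρ s ᵥ* P) x) : StoppingRule P μ where
  θ := reachedOfResidual P μ ρ
  σ s := reachedOfResidual P μ ρ s - ρ s
  σ_nonneg
    | 0, x => sub_nonneg.2 (hρμ x)
    | s + 1, x => sub_nonneg.2 (hρP s x)
  σ_le s x := sub_le_self _ (hρ s x)
  θ_zero _ := rfl
  θ_succ s y := by simp only [Pi.sub_apply, sub_sub_cancel]; rfl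

section OfResidual

variable {ρ : ℕ → S → ℝ} {hρ : ∀ s x, 0 ≤ ρ s x} {hρμ : ∀ x, ρ 0 x ≤ μ x}
  {hρP : ∀ s x, ρ (s + 1) x ≤ (ρ s ᵥ* P) x}

lemma ofResidual_σ_zero : (ofResidual ρ hρ hρμ hρP).σ 0 = μ - ρ 0 := rfl

lemma ofResidual_σ_succ (s : ℕ) :
    (ofResidual ρ hρ hρμ hρP).σ (s + 1) = ρ s ᵥ* P - ρ (s + 1) := rfl

end OfResidual

def stopNow (hμ : ∀ x, 0 ≤ μ x) : StoppingRule P μ :=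
  ofResidual 0 (fun _ _ => le_rfl) hμ fun s x => by simp

variable (hμ : ∀ x, 0 ≤ μ x)

lemma stopNow_σ_zero : (stopNow hμ : StoppingRule P μ).σ 0 = μ := sub_zero μ

lemma stopNow_σ_succ (s : ℕ) : (stopNow hμ : StoppingRule P μ).σ (s + 1) = 0 := by
  simp [stopNow, ofResidual_σ_succ]

lemma isStat_stopNow : IsStat (stopNow hμ : StoppingRule P μ) μ := fun y => by
  rw [tsum_eq_single 0 fun s hs => ?_, stopNow_σ_zero]
  obtain ⟨s, rfl⟩ := Nat.exists_eq_succ_of_ne_zero hs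
  rw [stopNow_σ_succ, Pi.zero_apply]

lemma stopExp_stopNow : stopExp (stopNow hμ : StoppingRule P μ) = 0 := by
  refine ENNReal.tsum_eq_zero.2 fun s => ?_
  cases s with
  | zero => simp
  | succ s => simp [stopNow_σ_succ]

variable {t k : ℕ} {R : StoppingRule P μ}

lemma exists_eq_mul_of_σ_ne_zero (hR : ∀ s y, R.σ s y = if t ∣ s then geo k (s / t) * π y else 0)
    {s : ℕ} {y : S} (hs : R.σ s y ≠ 0) : ∃ m, 1 ≤ m ∧ s = m * t := by
  rw [hR] at hs
  split_ifs at hs with hdvd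
  · refine ⟨s / t, Nat.one_le_iff_ne_zero.2 fun h0 => hs ?_, (Nat.div_mul_cancel hdvd).symm⟩
    rw [h0, geo_zero, zero_mul]
  · exact absurd rfl hs

lemma isStat_of_σ_eq_geo (ht : 0 < t) (hk : 0 < k)
    (hR : ∀ s y, R.σ s y = if t ∣ s then geo k (s / t) * π y else 0) : IsStat R π := fun y => by
  simp_rw [hR]
  refine ((hasSum_ite_dvd (f := fun m => geo k m * π y) ht).2 ?_).tsum_eq
  simpa using (hasSum_geo hk).mul_right (π y)

lemma stopExp_of_σ_eq_geo (ht : 0 < t) (hk : 0 < k) (hπ1 : ∑ y, π y = 1)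
    (hR : ∀ s y, R.σ s y = if t ∣ s then geo k (s / t) * π y else 0) :
    stopExp R = k * t := by
  have hmass : ∀ s, ∑ y, R.σ s y = if t ∣ s then geo k (s / t) else 0 := fun s => by
    simp_rw [hR]
    split_ifs <;> simp [← Finset.mul_sum, hπ1]
  have hsum : HasSum (fun s : ℕ => (s : ℝ) * ∑ y, R.σ s y) (k * t) := by
    refine ((hasSum_ite_dvd ht).2 ((hasSum_mul_geo hk).mul_right (t : ℝ))).congr_fun fun s => ?_
    rw [hmass]
    split_ifs with hdvd
    · rw [mul_right_comm, ← Nat.cast_mul, Nat.div_mul_cancel hdvd]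
    · rw [mul_zero]
  have hnonneg : ∀ s : ℕ, 0 ≤ (s : ℝ) * ∑ y, R.σ s y := fun s =>
    mul_nonneg (Nat.cast_nonneg s) (Finset.sum_nonneg fun y _ => R.σ_nonneg s y)
  calc stopExp R = ∑' s : ℕ, ENNReal.ofReal ((s : ℝ) * ∑ y, R.σ s y) := by
        refine tsum_congr fun s => ?_
        rw [ENNReal.ofReal_mul (Nat.cast_nonneg s), ENNReal.ofReal_natCast]
    _ = ENNReal.ofReal (k * t) := by
        rw [← ENNReal.ofReal_tsum_of_nonneg hnonneg hsum.summable, hsum.tsum_eq]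
    _ = k * t := by
        rw [← Nat.cast_mul, ENNReal.ofReal_natCast, Nat.cast_mul]

end StoppingRule

section Separation

variable {S : Type*} [Fintype S] {M : Matrix S S ℝ}

lemma sum_mul_le_vecMul {b v : S → ℝ} (hM : ∀ x y, b y ≤ M x y) (hv : ∀ x, 0 ≤ v x) (y : S) :
    (∑ x, v x) * b y ≤ (v ᵥ* M) y := by
  rw [Finset.sum_mul]
  exact Finset.sum_le_sum fun x _ => mul_le_mul_of_nonneg_left (hM x y) (hv x)

variable [DecidableEq S] {P : Matrix S S ℝ} {π μ : S → ℝ} {t : ℕ}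

lemma sum_vecMul_of_mem_rowStochastic (hM : M ∈ rowStochastic ℝ S) (v : S → ℝ) :
    ∑ y, (v ᵥ* M) y = ∑ x, v x := by
  rw [← dotProduct_one, ← dotProduct_one, ← dotProduct_mulVec, one_vecMul_of_mem_rowStochastic hM]

/-- The unstopped mass at time `m * t`: every block of `t` steps ends by stopping the mass
`geo 4 (m + 1) • π`, a quarter of what is left. -/
def sepResidual (P : Matrix S S ℝ) (π μ : S → ℝ) (t : ℕ) : ℕ → S → ℝ
  | 0 => μ
  | m + 1 => sepResidual P π μ t m ᵥ* P ^ t - geo 4 (m + 1) • π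

lemma sepResidual_nonneg_and_sum (hP : P ∈ rowStochastic ℝ S) (hπ1 : ∑ y, π y = 1)
    (hμ0 : ∀ x, 0 ≤ μ x) (hμ1 : ∑ x, μ x = 1) (hsep : ∀ x y, (1 / 4) * π y ≤ (P ^ t) x y) :
    ∀ m, (∀ x, 0 ≤ sepResidual P π μ t m x) ∧ ∑ x, sepResidual P π μ t m x = (3 / 4) ^ m
  | 0 => ⟨hμ0, hμ1⟩
  | m + 1 => by
    obtain ⟨ih0, ih1⟩ := sepResidual_nonneg_and_sum hP hπ1 hμ0 hμ1 hsep m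
    have hgeo : geo 4 (m + 1) = (3 / 4) ^ m * (1 / 4) := by norm_num [geo_succ, mul_comm]
    refine ⟨fun y => ?_, ?_⟩
    · have := sum_mul_le_vecMul hsep ih0 y
      simp only [sepResidual, Pi.sub_apply, Pi.smul_apply, smul_eq_mul, hgeo]
      rw [ih1] at this
      linarith
    · simp only [sepResidual, Pi.sub_apply, Pi.smul_apply, smul_eq_mul, Finset.sum_sub_distrib,
        sum_vecMul_of_mem_rowStochastic (pow_mem hP t), ih1, ← Finset.mul_sum, hπ1, hgeo]
      ring

lemma sepResidual_step (ht : 0 < t) (s : ℕ) :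
    sepResidual P π μ t (s / t) ᵥ* P ^ (s % t) ᵥ* P -
      sepResidual P π μ t ((s + 1) / t) ᵥ* P ^ ((s + 1) % t) =
      if t ∣ s + 1 then geo 4 ((s + 1) / t) • π else 0 := by
  rw [vecMul_vecMul, ← pow_succ]
  by_cases h : t ∣ s + 1
  · rw [if_pos h, Nat.succ_div_of_dvd h, Nat.mod_eq_zero_of_dvd h,
      Nat.mod_add_one_eq_of_dvd_add_one ht h, pow_zero, vecMul_one, sepResidual, sub_sub_cancel]
  · rw [if_neg h, Nat.succ_div_of_not_dvd h, Nat.add_one_mod_of_not_dvd h, sub_self]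

lemma exists_stoppingRule_σ_eq_geo (hP : P ∈ rowStochastic ℝ S) (hπ0 : ∀ y, 0 ≤ π y)
    (hπ1 : ∑ y, π y = 1) (hμ0 : ∀ x, 0 ≤ μ x) (hμ1 : ∑ x, μ x = 1)
    (hsep : ∀ x y, (1 / 4) * π y ≤ (P ^ t) x y) (ht : 0 < t) :
    ∃ R : StoppingRule P μ, ∀ s y, R.σ s y = if t ∣ s then geo 4 (s / t) * π y else 0 := by
  set ρ : ℕ → S → ℝ := fun s => sepResidual P π μ t (s / t) ᵥ* P ^ (s % t)
  have hρ0 : ρ 0 = μ := by simp [ρ, sepResidual]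
  have hρ s x : 0 ≤ ρ s x := nonneg_vecMul_of_mem_rowStochastic (pow_mem hP _)
    (sepResidual_nonneg_and_sum hP hπ1 hμ0 hμ1 hsep _).1 x
  have hρP s x : ρ (s + 1) x ≤ (ρ s ᵥ* P) x := by
    have := congrFun (sepResidual_step (P := P) (π := π) (μ := μ) ht s) x
    rw [Pi.sub_apply] at this
    have : 0 ≤ (if t ∣ s + 1 then geo 4 ((s + 1) / t) • π else 0) x := by
      split_ifs
      · exact mul_nonneg (geo_nonneg _ _) (hπ0 x)
      · exact le_rfl
    linarith
  refine ⟨StoppingRule.ofResidual ρ hρ (fun x => hρ0.le x) hρP, ?_⟩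
  rintro (_ | s) y
  · simp [StoppingRule.ofResidual_σ_zero, hρ0, geo_zero]
  · rw [StoppingRule.ofResidual_σ_succ, sepResidual_step ht s]
    split_ifs <;> rfl

lemma eq_of_sep_zero (hπ1 : ∑ y, π y = 1) (hμ1 : ∑ x, μ x = 1)
    (hsep : ∀ x y, (1 / 4) * π y ≤ (P ^ 0) x y) : μ = π := by
  have : Subsingleton S := ⟨fun x y => by
    by_contra hxy
    have hπ : ∀ z, π z ≤ 0 := fun z => by
      obtain ⟨w, hw⟩ : ∃ w, w ≠ z := by
        by_cases hxz : x = z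
        · exact ⟨y, fun hyz => hxy (hxz.trans hyz.symm)⟩
        · exact ⟨x, hxz⟩
      have := hsep w z
      rw [pow_zero, one_apply_ne hw] at this
      linarith
    have := Finset.sum_nonpos fun z (_ : z ∈ Finset.univ) => hπ z
    linarith⟩
  funext y
  rw [Fintype.sum_subsingleton _ y] at hπ1 hμ1
  rw [hπ1, hμ1]

lemma exists_stoppingRule_of_sep (hP : P ∈ rowStochastic ℝ S) (hπ0 : ∀ y, 0 ≤ π y)
    (hπ1 : ∑ y, π y = 1) (hμ0 : ∀ x, 0 ≤ μ x) (hμ1 : ∑ x, μ x = 1)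
    (hsep : ∀ x y, (1 / 4) * π y ≤ (P ^ t) x y) :
    ∃ R : StoppingRule P μ, IsStat R π ∧ (∀ s y, R.σ s y ≠ 0 → ∃ m, 1 ≤ m ∧ s = m * t) ∧
      stopExp R = 4 * t := by
  rcases Nat.eq_zero_or_pos t with rfl | ht
  · obtain rfl : μ = π := eq_of_sep_zero hπ1 hμ1 hsep
    refine ⟨StoppingRule.stopNow hμ0, StoppingRule.isStat_stopNow hμ0,
      fun s y hs => ⟨1, le_rfl, ?_⟩, by simp [StoppingRule.stopExp_stopNow]⟩
    cases s with
    | zero => rfl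
    | succ s => simp [StoppingRule.stopNow_σ_succ] at hs
  · obtain ⟨R, hR⟩ := exists_stoppingRule_σ_eq_geo hP hπ0 hπ1 hμ0 hμ1 hsep ht
    refine ⟨R, StoppingRule.isStat_of_σ_eq_geo ht four_pos hR,
      fun s y => StoppingRule.exists_eq_mul_of_σ_ne_zero hR, ?_⟩
    exact_mod_cast StoppingRule.stopExp_of_σ_eq_geo ht four_pos hπ1 hR

end Separation

lemma tstop_le_of_forall_exists {S : Type*} [Fintype S] [DecidableEq S] {P : Matrix S S ℝ}
    {π : S → ℝ} {T : ℝ≥0∞}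
    (h : ∀ x, ∃ R : StoppingRule P (fun y => if y = x then (1 : ℝ) else 0),
      IsStat R π ∧ stopExp R ≤ T) : tstop P π ≤ T :=
  iSup_le fun x => let ⟨R, hR, hRT⟩ := h x; iInf_le_of_le ⟨R, hR⟩ hRT

theorem claim_tstop_le_tsep_general {S : Type*} [Fintype S] [DecidableEq S]
    (P : Matrix S S ℝ) (π : S → ℝ)
    (hP0 : ∀ x y, 0 ≤ P x y) (hP1 : ∀ x, ∑ y, P x y = 1)
    (hπ0 : ∀ x, 0 ≤ π x) (hπ1 : ∑ x, π x = 1)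
    (t : ℕ) (hsep : ∀ x y, (1 / 4) * π y ≤ (P ^ t) x y) :
    (∀ x : S, ∃ R : StoppingRule P (fun y => if y = x then (1 : ℝ) else 0),
        IsStat R π ∧ (∀ s y, R.σ s y ≠ 0 → ∃ m, 1 ≤ m ∧ s = m * t) ∧
        stopExp R = 4 * (t : ℝ≥0∞)) ∧
    tstop P π ≤ 4 * ⨅ (u : ℕ) (_ : ∀ x y, (1 / 4) * π y ≤ (P ^ u) x y), (u : ℝ≥0∞) := by
  have hP : P ∈ rowStochastic ℝ S := mem_rowStochastic_iff_sum.2 ⟨hP0, hP1⟩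
  have hrule u (hu : ∀ x y, (1 / 4) * π y ≤ (P ^ u) x y) (x : S) :=
    exists_stoppingRule_of_sep (μ := fun y => if y = x then (1 : ℝ) else 0) hP hπ0 hπ1
      (fun y => by split_ifs <;> norm_num) (by simp) hu
  refine ⟨hrule t hsep, ?_⟩
  simp_rw [ENNReal.mul_iInf_of_ne four_ne_zero ENNReal.ofNat_ne_top]
  refine le_iInf₂ fun u hu => tstop_le_of_forall_exists fun x => ?_
  obtain ⟨R, hR, -, hRu⟩ := hrule u hu x
  exact ⟨R, hR, hRu.le⟩

/-- if `t` satisfies the separation bound `P^t(x,y) ≥ (1/4)π(y)` for all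
`x, y` (i.e. `s(t) ≤ 3/4`), then from every starting state there is a randomized
stopping time supported on `{t, 2t, 3t, ...}` whose terminal distribution is `π` and
whose expectation is exactly `4t`.  In particular `t_stop ≤ 4·t_sep`. -/
theorem claim_tstop_le_tsep {S : Type*} [Fintype S] [DecidableEq S]
    (P : Matrix S S ℝ) (π : S → ℝ)
    (hP0 : ∀ x y, 0 ≤ P x y) (hP1 : ∀ x, ∑ y, P x y = 1)
    (hirr : ∀ x y, ∃ n, 0 < (P ^ n) x y)
    (hπ0 : ∀ x, 0 ≤ π x) (hπ1 : ∑ x, π x = 1)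
    (hπP : ∀ y, ∑ x, π x * P x y = π y)
    (t : ℕ) (hsep : ∀ x y, (1 / 4) * π y ≤ (P ^ t) x y) :
    (∀ x : S, ∃ R : StoppingRule P (fun y => if y = x then (1 : ℝ) else 0),
        IsStat R π ∧ (∀ s y, R.σ s y ≠ 0 → ∃ m, 1 ≤ m ∧ s = m * t) ∧
        stopExp R = 4 * (t : ℝ≥0∞)) ∧
    tstop P π ≤ 4 * ⨅ (u : ℕ) (_ : ∀ x y, (1 / 4) * π y ≤ (P ^ u) x y), (u : ℝ≥0∞) :=
  claim_tstop_le_tsep_general P π hP0 hP1 hπ0 hπ1 t hsep
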